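/- arXiv:1408.5559 — 7 statements merged into one kernel-verified Lean document; each statement's English description precedes it below -/
import Mathlib

section
/- For any solution x of the EigenAnt dynamics with positive initial conditions, every component stays positive for all time; more precisely, for every i = 1,…,n and every t ≥ 0 one has x_i(t) ≥ x_i(0) e^{−αt} > 0. In particular S(t) := Σ_{j=1}^n x_j(t) > 0 for all t ≥ 0. -/
open MeasureTheory Set Real

/-!
Each component solves the scalar linear ODE `xᵢ' = gᵢ xᵢ` with coefficient
`gᵢ t = -α + β dᵢ / S t`, which is continuous on `[0, ∞)` because `S` is continuous and never
vanishes there. The integrating factor gives `xᵢ t = xᵢ 0 * exp (∫₀ᵗ gᵢ) > 0`, so `S > 0`;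
then `gᵢ ≥ -α`, and the integral is at least `-α t`.
-/

theorem eq_mul_exp_integral_of_hasDerivAt {f g : ℝ → ℝ} (hg : ContinuousOn g (Ici 0))
    (hf : ∀ t, 0 ≤ t → HasDerivAt f (g t * f t) t) {t : ℝ} (ht : 0 ≤ t) :
    f t = f 0 * exp (∫ s in (0)..t, g s) := by
  -- `g` need not be continuous on `ℝ`; extend it continuously by `g 0` to the left.
  set g' : ℝ → ℝ := fun s => g (max s 0)
  have hg' : Continuous g' :=
    hg.comp_continuous (continuous_id.max continuous_const) fun s => le_max_right s 0
  have hg'_eq : ∀ s, 0 ≤ s → g' s = g s := fun s hs => by simp only [g', max_eq_left hs]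
  set G : ℝ → ℝ := fun u => ∫ s in (0)..u, g' s
  have hG : ∀ u, HasDerivAt G (g' u) u := fun u =>
    (hg'.integral_hasStrictDerivAt 0 u).hasDerivAt
  have hconst : ∀ u ∈ Icc 0 t, f u * exp (-G u) = f 0 * exp (-G 0) := by
    refine constant_of_has_deriv_right_zero (fun u hu => ?_) (fun u hu => ?_)
    · exact ((hf u hu.1).continuousAt.mul
        (hG u).continuousAt.neg.rexp).continuousWithinAt
    · have hderiv := (hf u hu.1).fun_mul (hG u).fun_neg.exp
      rw [hg'_eq u hu.1] at hderiv
      convert hderiv.hasDerivWithinAt using 1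
      ring
  have hGt : G t = ∫ s in (0)..t, g s :=
    intervalIntegral.integral_congr fun s hs => by
      rw [uIcc_of_le ht] at hs
      exact hg'_eq s hs.1
  have hend := hconst t ⟨ht, le_rfl⟩
  simp only [G, intervalIntegral.integral_same, neg_zero, exp_zero, mul_one] at hend
  rw [← hGt, ← hend, mul_assoc, ← exp_add, neg_add_cancel, exp_zero, mul_one]

theorem pos_of_hasDerivAt_eq_mul {f g : ℝ → ℝ} (hg : ContinuousOn g (Ici 0))
    (hf : ∀ t, 0 ≤ t → HasDerivAt f (g t * f t) t) (hf0 : 0 < f 0) {t : ℝ} (ht : 0 ≤ t) :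
    0 < f t := by
  rw [eq_mul_exp_integral_of_hasDerivAt hg hf ht]
  positivity

theorem mul_exp_le_of_hasDerivAt_eq_mul {f g : ℝ → ℝ} {c : ℝ} (hg : ContinuousOn g (Ici 0))
    (hf : ∀ t, 0 ≤ t → HasDerivAt f (g t * f t) t) (hf0 : 0 ≤ f 0)
    (hc : ∀ t, 0 ≤ t → c ≤ g t) {t : ℝ} (ht : 0 ≤ t) :
    f 0 * exp (c * t) ≤ f t := by
  have hint : c * t ≤ ∫ s in (0)..t, g s := by
    have := intervalIntegral.integral_mono_on ht (intervalIntegrable_const (μ := volume))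
      ((hg.mono Icc_subset_Ici_self).intervalIntegrable_of_Icc ht) fun s hs => hc s hs.1
    rwa [intervalIntegral.integral_const, sub_zero, smul_eq_mul, mul_comm] at this
  rw [eq_mul_exp_integral_of_hasDerivAt hg hf ht]
  exact mul_le_mul_of_nonneg_left (exp_le_exp.mpr hint) hf0

theorem stmt0_general
    (n : ℕ) (α β : ℝ) (hβ : 0 < β)
    (d : Fin n → ℝ) (hdpos : ∀ i, 0 < d i)
    (x : ℝ → Fin n → ℝ)
    (hS : ∀ t : ℝ, 0 ≤ t → (∑ j, x t j) ≠ 0)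
    (hode : ∀ (i : Fin n) (t : ℝ), 0 ≤ t →
      HasDerivAt (fun s => x s i) ((-α + β * d i / (∑ j, x t j)) * x t i) t)
    (hx0 : ∀ i, 0 < x 0 i)
    :
    (∀ (i : Fin n) (t : ℝ), 0 ≤ t →
        x 0 i * Real.exp (-α * t) ≤ x t i ∧ 0 < x 0 i * Real.exp (-α * t)) ∧
    (∀ t : ℝ, 0 ≤ t → 0 < ∑ j, x t j) := by
  have hsum_cont : ContinuousOn (fun t => ∑ j, x t j) (Ici 0) := fun t ht =>
    (HasDerivAt.fun_sum fun j _ => hode j t ht).continuousAt.continuousWithinAt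
  have hcoef_cont : ∀ i, ContinuousOn (fun t => -α + β * d i / ∑ j, x t j) (Ici 0) :=
    fun i => continuousOn_const.add (continuousOn_const.div hsum_cont hS)
  have hpos : ∀ i t, 0 ≤ t → 0 < x t i := fun i t =>
    pos_of_hasDerivAt_eq_mul (hcoef_cont i) (hode i) (hx0 i)
  have hsum_pos : ∀ t, 0 ≤ t → 0 < ∑ j, x t j := fun t ht =>
    (Finset.sum_nonneg fun j _ => (hpos j t ht).le).lt_of_ne (hS t ht).symm
  have hcoef_ge : ∀ i t, 0 ≤ t → -α ≤ -α + β * d i / ∑ j, x t j := fun i t ht =>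
    le_add_of_nonneg_right (div_pos (mul_pos hβ (hdpos i)) (hsum_pos t ht)).le
  refine ⟨fun i t ht => ⟨?_, by have := hx0 i; positivity⟩, hsum_pos⟩
  exact mul_exp_le_of_hasDerivAt_eq_mul (hcoef_cont i) (hode i) (hx0 i).le (hcoef_ge i) ht

theorem stmt0
    (n : ℕ) (hn : 0 < n) (α β : ℝ) (hα : 0 < α) (hβ : 0 < β)
    (d : Fin n → ℝ) (hd : ∀ i j : Fin n, i ≤ j → d j ≤ d i) (hdpos : ∀ i, 0 < d i)
    (x : ℝ → Fin n → ℝ)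
    (hS : ∀ t : ℝ, 0 ≤ t → (∑ j, x t j) ≠ 0)
    (hode : ∀ (i : Fin n) (t : ℝ), 0 ≤ t →
      HasDerivAt (fun s => x s i) ((-α + β * d i / (∑ j, x t j)) * x t i) t)
    (hx0 : ∀ i, 0 < x 0 i)
    :
    (∀ (i : Fin n) (t : ℝ), 0 ≤ t →
        x 0 i * Real.exp (-α * t) ≤ x t i ∧ 0 < x 0 i * Real.exp (-α * t)) ∧
    (∀ t : ℝ, 0 ≤ t → 0 < ∑ j, x t j) :=
  stmt0_general n α β hβ d hdpos x hS hode hx0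
end

section
/- For any solution x of the EigenAnt dynamics with positive initial conditions, the sum S(t) := Σ_{j=1}^n x_j(t) satisfies the differential inequalities β d_n ≤ Ṡ(t) + α S(t) ≤ β d_1 for all t ≥ 0. -/
open Filter MeasureTheory Set Real

/-!
Each coordinate solves a scalar linear ODE `x_i' = c_i(t) x_i` with a continuous coefficient, so
by uniqueness of solutions it can never reach `0` without vanishing identically; hence all `x_i`
stay positive. Summing the equations gives `S' + α S = β (∑ d_j x_j) / S`, and a weighted
average of the `d_j` with positive weights lies between `d_n` and `d_1`.
-/

theorem pos_of_hasDerivAt_mul_self {f c : ℝ → ℝ} {a b : ℝ} (hab : a ≤ b)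
    (hc : ContinuousOn c (Icc a b)) (hf : ∀ t ∈ Icc a b, HasDerivAt f (c t * f t) t)
    (ha : 0 < f a) : 0 < f b := by
  by_contra! hb
  have hfcont : ContinuousOn f (Icc a b) := fun t ht => (hf t ht).continuousAt.continuousWithinAt
  obtain ⟨t₁, ht₁, hft₁⟩ := intermediate_value_Icc' hab hfcont ⟨hb, ha.le⟩
  obtain ⟨C, hC⟩ := isCompact_Icc.exists_bound_of_continuousOn hc
  have hsub : Icc a t₁ ⊆ Icc a b := Icc_subset_Icc_right ht₁.2
  -- `f` and `0` solve the same linear ODE `y' = c t * y` and agree at `t₁`.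
  have hzero : EqOn f 0 (Icc a t₁) := by
    refine ODE_solution_unique_of_mem_Icc_left (v := fun t y => c t * y) (s := fun _ => univ)
      (K := C.toNNReal) (fun t ht => ?_) (hfcont.mono hsub)
      (fun t ht => (hf t (hsub (Ioc_subset_Icc_self ht))).hasDerivWithinAt) (fun _ _ => trivial)
      continuousOn_const
      (fun t _ => by simpa [Pi.zero_def] using hasDerivWithinAt_const t _ (0 : ℝ))
      (fun _ _ => trivial) hft₁
    refine ((lipschitzWith_smul (c t)).weaken ?_).lipschitzOnWith
    rw [← NNReal.coe_le_coe, coe_nnnorm, Real.coe_toNNReal']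
    exact (hC t (hsub (Ioc_subset_Icc_self ht))).trans (le_max_left _ _)
  exact ha.ne' (hzero ⟨le_rfl, ht₁.1⟩)

section WeightedAverage

variable {ι : Type*} {s : Finset ι} {w d : ι → ℝ} {m : ℝ}

theorem le_sum_mul_div_sum (hw : ∀ i ∈ s, 0 ≤ w i) (hpos : 0 < ∑ i ∈ s, w i)
    (hm : ∀ i ∈ s, m ≤ d i) : m ≤ (∑ i ∈ s, d i * w i) / ∑ i ∈ s, w i := by
  rw [le_div_iff₀ hpos, Finset.mul_sum]
  exact Finset.sum_le_sum fun i hi => mul_le_mul_of_nonneg_right (hm i hi) (hw i hi)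

theorem sum_mul_div_sum_le (hw : ∀ i ∈ s, 0 ≤ w i) (hpos : 0 < ∑ i ∈ s, w i)
    (hm : ∀ i ∈ s, d i ≤ m) : (∑ i ∈ s, d i * w i) / ∑ i ∈ s, w i ≤ m := by
  rw [div_le_iff₀ hpos, Finset.mul_sum]
  exact Finset.sum_le_sum fun i hi => mul_le_mul_of_nonneg_right (hm i hi) (hw i hi)

end WeightedAverage

section EigenAnt

variable {n : ℕ} {α β : ℝ} {d : Fin n → ℝ} {x : ℝ → Fin n → ℝ}

theorem deriv_sum_add_mul_sum_of_eigenAnt {t : ℝ} (hSt : (∑ j, x t j) ≠ 0)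
    (hode : ∀ i, HasDerivAt (fun s => x s i) ((-α + β * d i / (∑ j, x t j)) * x t i) t) :
    deriv (fun s => ∑ j, x s j) t + α * ∑ j, x t j
      = β * ((∑ j, d j * x t j) / ∑ j, x t j) := by
  rw [(HasDerivAt.fun_sum fun i _ => hode i).deriv]
  simp only [add_mul, Finset.sum_add_distrib, neg_mul, Finset.sum_neg_distrib, ← Finset.mul_sum,
    div_mul_eq_mul_div, ← Finset.sum_div, mul_assoc]
  field_simp
  ring

theorem pos_of_eigenAnt
    (hS : ∀ t : ℝ, 0 ≤ t → (∑ j, x t j) ≠ 0)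
    (hode : ∀ (i : Fin n) (t : ℝ), 0 ≤ t →
      HasDerivAt (fun s => x s i) ((-α + β * d i / (∑ j, x t j)) * x t i) t)
    (hx0 : ∀ i, 0 < x 0 i) {t : ℝ} (ht : 0 ≤ t) (i : Fin n) : 0 < x t i := by
  have hScont : ContinuousOn (fun s => ∑ j, x s j) (Icc 0 t) := fun s hs =>
    (HasDerivAt.fun_sum fun j _ => hode j s hs.1).continuousAt.continuousWithinAt
  exact pos_of_hasDerivAt_mul_self ht
    (continuousOn_const.add (continuousOn_const.div hScont fun s hs => hS s hs.1))
    (fun s hs => hode i s hs.1) (hx0 i)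

end EigenAnt

theorem stmt2
    (n : ℕ) (hn : 0 < n) (α β : ℝ) (hβ : 0 < β)
    (d : Fin n → ℝ) (hd : ∀ i j : Fin n, i ≤ j → d j ≤ d i)
    (x : ℝ → Fin n → ℝ)
    (hS : ∀ t : ℝ, 0 ≤ t → (∑ j, x t j) ≠ 0)
    (hode : ∀ (i : Fin n) (t : ℝ), 0 ≤ t →
      HasDerivAt (fun s => x s i) ((-α + β * d i / (∑ j, x t j)) * x t i) t)
    (hx0 : ∀ i, 0 < x 0 i)
    :
    ∀ t : ℝ, 0 ≤ t →
      β * d ⟨n - 1, by omega⟩ ≤ deriv (fun s => ∑ j, x s j) t + α * ∑ j, x t j ∧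
      deriv (fun s => ∑ j, x s j) t + α * ∑ j, x t j ≤ β * d ⟨0, hn⟩ := by
  intro t ht
  have hx : ∀ i, 0 ≤ x t i := fun i => (pos_of_eigenAnt hS hode hx0 ht i).le
  have hSpos : 0 < ∑ j, x t j :=
    Finset.sum_pos (fun j _ => pos_of_eigenAnt hS hode hx0 ht j) ⟨⟨0, hn⟩, Finset.mem_univ _⟩
  rw [deriv_sum_add_mul_sum_of_eigenAnt (hS t ht) fun i => hode i t ht]
  constructor
  · exact mul_le_mul_of_nonneg_left (le_sum_mul_div_sum (fun i _ => hx i) hSpos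
      fun j _ => hd _ _ (Fin.le_def.2 (Nat.le_sub_one_of_lt j.isLt))) hβ.le
  · exact mul_le_mul_of_nonneg_left (sum_mul_div_sum_le (fun i _ => hx i) hSpos
      fun j _ => hd _ _ (Fin.le_def.2 (Nat.zero_le _))) hβ.le
end

section
/- For any solution x of the EigenAnt dynamics with positive initial conditions, defining F(u) := Σ_{i=1}^n (x_i(0)/(β d_i)) e^{β d_i u}, one has for every t ≥ 0 the identity S(t) = e^{−αt} F′( ∫₀^t ds/S(s) ), i.e. S(t) = e^{−αt} Σ_{i=1}^n x_i(0) e^{β d_i ∫₀^t ds/S(s)}, where S(t) := Σ_{j=1}^n x_j(t). -/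
/-!
Although the system is nonlinear, each coordinate solves the scalar linear equation
`ẋᵢ = kᵢ(t) xᵢ` with the continuous coefficient `kᵢ = -α + β dᵢ / S`, so
`xᵢ(t) = xᵢ(0) exp ∫₀ᵗ kᵢ = xᵢ(0) e^{-αt} e^{β dᵢ ∫₀ᵗ 1/S}`;
summing over `i` gives the identity.
-/

open MeasureTheory Set Real

theorem eq_mul_exp_integral_of_hasDerivAt_s8 {y k : ℝ → ℝ} {a b : ℝ} (hab : a ≤ b)
    (hk : ContinuousOn k (Icc a b)) (hy : ContinuousOn y (Icc a b))
    (hy' : ∀ s ∈ Ioo a b, HasDerivAt y (k s * y s) s) :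
    y b = y a * exp (∫ s in a..b, k s) := by
  set K : ℝ → ℝ := fun u => ∫ s in a..u, k s
  have hK : ContinuousOn K (Icc a b) := by
    have hk_int : IntegrableOn k (uIcc a b) := by
      rw [uIcc_of_le hab]; exact hk.integrableOn_compact isCompact_Icc
    simpa only [uIcc_of_le hab] using intervalIntegral.continuousOn_primitive_interval hk_int
  have hK' : ∀ s ∈ Ioo a b, HasDerivAt K (k s) s := fun s hs =>
    intervalIntegral.integral_hasDerivAt_right
      ((hk.mono (uIcc_subset_Icc ⟨le_rfl, hab⟩ (Ioo_subset_Icc_self hs))).intervalIntegrable)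
      (ContinuousOn.stronglyMeasurableAtFilter isOpen_Ioo (hk.mono Ioo_subset_Icc_self) s hs)
      (hk.continuousAt (Icc_mem_nhds hs.1 hs.2))
  -- `y · exp (-∫ k)` has derivative zero.
  have hconst : ∫ s in a..b, (0 : ℝ) = y b * exp (-K b) - y a * exp (-K a) := by
    refine intervalIntegral.integral_eq_sub_of_hasDerivAt_of_le hab
      (hy.mul hK.neg.rexp) (fun s hs => ?_) intervalIntegrable_const
    exact ((hy' s hs).mul (hK' s hs).neg.exp).congr_deriv (by ring)
  have hKa : K a = 0 := intervalIntegral.integral_same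
  rw [intervalIntegral.integral_zero, hKa, neg_zero, exp_zero, mul_one, eq_comm,
    sub_eq_zero] at hconst
  rw [← hconst, mul_assoc, ← exp_add, neg_add_cancel, exp_zero, mul_one]

theorem stmt8_general
    (n : ℕ) (α β : ℝ)
    (d : Fin n → ℝ)
    (x : ℝ → Fin n → ℝ)
    (hS : ∀ t : ℝ, 0 ≤ t → (∑ j, x t j) ≠ 0)
    (hode : ∀ (i : Fin n) (t : ℝ), 0 ≤ t →
      HasDerivAt (fun s => x s i) ((-α + β * d i / (∑ j, x t j)) * x t i) t)
    :
    ∀ t : ℝ, 0 ≤ t →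
      ∑ j, x t j =
        Real.exp (-α * t) * ∑ i, x 0 i * Real.exp (β * d i * (∫ s in (0:ℝ)..t, (∑ j, x s j)⁻¹)) := by
  intro t ht
  have hx_cont (i : Fin n) : ContinuousOn (fun s => x s i) (Icc 0 t) := fun s hs =>
    (hode i s hs.1).continuousAt.continuousWithinAt
  have hS_inv_cont : ContinuousOn (fun s => (∑ j, x s j)⁻¹) (Icc 0 t) :=
    (continuousOn_finsetSum _ fun j _ => hx_cont j).inv₀ fun s hs => hS s hs.1
  have hcoord (i : Fin n) :
      x t i = x 0 i * exp (-α * t + β * d i * ∫ s in (0:ℝ)..t, (∑ j, x s j)⁻¹) := by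
    have hk : ContinuousOn (fun s => -α + β * d i * (∑ j, x s j)⁻¹) (Icc 0 t) :=
      continuousOn_const.add (continuousOn_const.mul hS_inv_cont)
    rw [eq_mul_exp_integral_of_hasDerivAt_s8 ht hk (hx_cont i) fun s hs => by
        simpa only [div_eq_mul_inv] using hode i s hs.1.le,
      intervalIntegral.integral_add intervalIntegrable_const
        ((hS_inv_cont.intervalIntegrable_of_Icc ht).const_mul _),
      intervalIntegral.integral_const, intervalIntegral.integral_const_mul,
      sub_zero, smul_eq_mul, mul_comm t]
  simp only [hcoord, exp_add, Finset.mul_sum]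
  exact Finset.sum_congr rfl fun i _ => by ring

theorem stmt8
    (n : ℕ) (hn : 0 < n) (α β : ℝ) (hα : 0 < α) (hβ : 0 < β)
    (d : Fin n → ℝ) (hd : ∀ i j : Fin n, i ≤ j → d j ≤ d i) (hdpos : ∀ i, 0 < d i)
    (x : ℝ → Fin n → ℝ)
    (hS : ∀ t : ℝ, 0 ≤ t → (∑ j, x t j) ≠ 0)
    (hode : ∀ (i : Fin n) (t : ℝ), 0 ≤ t →
      HasDerivAt (fun s => x s i) ((-α + β * d i / (∑ j, x t j)) * x t i) t)
    (hx0 : ∀ i, 0 < x 0 i)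
    :
    ∀ t : ℝ, 0 ≤ t →
      ∑ j, x t j =
        Real.exp (-α * t) * ∑ i, x 0 i * Real.exp (β * d i * (∫ s in (0:ℝ)..t, (∑ j, x s j)⁻¹)) :=
  stmt8_general n α β d x hS hode
end

section
/- For any solution x of the EigenAnt dynamics with positive initial conditions, defining F(u) := Σ_{i=1}^n (x_i(0)/(β d_i)) e^{β d_i u}, one has for every t ≥ 0 the identity F( ∫₀^t ds/S(s) ) = F(0) + (1/α)(e^{αt} − 1); equivalently ∫₀^t ds/S(s) = F^{−1}( F(0) + (1/α)(e^{αt} − 1) ), where S(t) := Σ_{j=1}^n x_j(t) and F^{−1} is the inverse of the strictly increasing function F on [0,∞). -/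
/-!
Put `τ(t) = ∫₀ᵗ ds / S(s)`. Each equation `ẋᵢ = (-α + β dᵢ τ') xᵢ` is linear with primitive
`β dᵢ τ - α t` of its coefficient, so `xᵢ(t) = xᵢ(0) e^{β dᵢ τ(t) - α t}`; in particular every `xᵢ`
stays positive, and `S(t) e^{α t} = ∑ᵢ xᵢ(0) e^{β dᵢ τ(t)} = F'(τ(t))`. Hence
`(F ∘ τ)' = F'(τ) / S = e^{α t}`, which integrates to the identity; `F` is strictly increasing,
so it determines `τ(t)`.
-/

open Set Real

theorem hasDerivWithinAt_integral_Icc {E : Type*} [NormedAddCommGroup E] [NormedSpace ℝ E]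
    [CompleteSpace E] {f : ℝ → E} {a b t : ℝ} (hf : ContinuousOn f (Icc a b))
    (ht : t ∈ Icc a b) :
    HasDerivWithinAt (fun u => ∫ s in a..u, f s) (f t) (Icc a b) t := by
  have : Fact (t ∈ Icc a b) := ⟨ht⟩
  exact intervalIntegral.integral_hasDerivWithinAt_right
    ((hf.mono (Icc_subset_Icc_right ht.2)).intervalIntegrable_of_Icc ht.1)
    (hf.stronglyMeasurableAtFilter_nhdsWithin measurableSet_Icc t) (hf t ht)

theorem eq_of_hasDerivWithinAt_Icc_eq {f g f' : ℝ → ℝ} {a b : ℝ}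
    (hf : ∀ t ∈ Icc a b, HasDerivWithinAt f (f' t) (Icc a b) t)
    (hg : ∀ t ∈ Icc a b, HasDerivWithinAt g (f' t) (Icc a b) t) (ha : f a = g a) :
    ∀ t ∈ Icc a b, f t = g t := by
  have hright {h : ℝ → ℝ} (hh : ∀ t ∈ Icc a b, HasDerivWithinAt h (f' t) (Icc a b) t) :
      ∀ t ∈ Ico a b, HasDerivWithinAt h (f' t) (Ici t) t := fun t ht =>
    (hh t (Ico_subset_Icc_self ht)).mono_of_mem_nhdsWithin (Icc_mem_nhdsGE_of_mem ht)
  exact eq_of_has_deriv_right_eq (hright hf) (hright hg)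
    (fun t ht => (hf t ht).continuousWithinAt) (fun t ht => (hg t ht).continuousWithinAt) ha

theorem eq_mul_exp_sub_of_hasDerivWithinAt {y a A : ℝ → ℝ} {s b : ℝ}
    (hA : ∀ t ∈ Icc s b, HasDerivWithinAt A (a t) (Icc s b) t)
    (hy : ∀ t ∈ Icc s b, HasDerivWithinAt y (a t * y t) (Icc s b) t) :
    ∀ t ∈ Icc s b, y t = y s * exp (A t - A s) := by
  have hconst : ∀ t ∈ Icc s b, y t * exp (-A t) = y s * exp (-A s) := by
    refine eq_of_hasDerivWithinAt_Icc_eq (f' := fun _ => 0) (fun t ht => ?_)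
      (fun t _ => hasDerivWithinAt_const _ _ _) rfl
    exact ((hy t ht).mul (hA t ht).neg.exp).congr_deriv (by ring)
  intro t ht
  calc y t = y t * exp (-A t) * exp (A t) := by
        rw [mul_assoc, ← exp_add, neg_add_cancel, exp_zero, mul_one]
    _ = y s * exp (A t - A s) := by rw [hconst t ht, mul_assoc, ← exp_add]; ring_nf

theorem strictMono_sum_mul_exp {ι : Type*} [Fintype ι] [Nonempty ι] {c k : ι → ℝ}
    (hc : ∀ i, 0 < c i) (hk : ∀ i, 0 < k i) :
    StrictMono fun u => ∑ i, c i * exp (k i * u) := fun _ _ huv =>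
  Finset.sum_lt_sum_of_nonempty Finset.univ_nonempty fun i _ =>
    mul_lt_mul_of_pos_left (exp_lt_exp.2 (mul_lt_mul_of_pos_left huv (hk i))) (hc i)

namespace EigenAnt

variable {ι : Type*} [Fintype ι] {α β : ℝ} {d : ι → ℝ} {x : ℝ → ι → ℝ}

structure IsSolution (α β : ℝ) (d : ι → ℝ) (x : ℝ → ι → ℝ) : Prop where
  sum_ne_zero : ∀ t, 0 ≤ t → (∑ j, x t j) ≠ 0
  hasDerivAt : ∀ i t, 0 ≤ t →
    HasDerivAt (fun s => x s i) ((-α + β * d i / (∑ j, x t j)) * x t i) t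

theorem hasDerivWithinAt_integral_inv_sum
    (hx : IsSolution α β d x) {T t : ℝ} (ht : t ∈ Icc 0 T) :
    HasDerivWithinAt (fun u => ∫ s in (0:ℝ)..u, (∑ j, x s j)⁻¹) (∑ j, x t j)⁻¹ (Icc 0 T) t :=
  hasDerivWithinAt_integral_Icc (fun s hs =>
    (HasDerivAt.fun_sum fun i _ => hx.hasDerivAt i s hs.1).continuousAt.continuousWithinAt.inv₀
      (hx.sum_ne_zero s hs.1)) ht

theorem eq_mul_exp
    (hx : IsSolution α β d x) (i : ι) {t : ℝ} (ht : 0 ≤ t) :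
    x t i = x 0 i * exp (β * d i * (∫ s in (0:ℝ)..t, (∑ j, x s j)⁻¹) - α * t) := by
  have := eq_mul_exp_sub_of_hasDerivWithinAt (y := fun s => x s i)
    (A := fun u => β * d i * (∫ s in (0:ℝ)..u, (∑ j, x s j)⁻¹) - α * u)
    (fun u hu => (((hasDerivWithinAt_integral_inv_sum hx hu).const_mul (β * d i)).sub
      ((hasDerivWithinAt_id u _).const_mul α)).congr_deriv (by ring))
    (fun u hu => (hx.hasDerivAt i u hu.1).hasDerivWithinAt) t ⟨ht, le_rfl⟩
  simpa only [intervalIntegral.integral_same, mul_zero, sub_zero] using this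

theorem sum_mul_exp
    (hx : IsSolution α β d x) {t : ℝ} (ht : 0 ≤ t) :
    (∑ j, x t j) * exp (α * t) =
      ∑ i, x 0 i * exp (β * d i * ∫ s in (0:ℝ)..t, (∑ j, x s j)⁻¹) := by
  simp only [Finset.sum_mul, eq_mul_exp hx _ ht, mul_assoc, ← exp_add, sub_add_cancel]

theorem sum_pos
    (hx : IsSolution α β d x) (hx0 : ∀ i, 0 < x 0 i) {t : ℝ} (ht : 0 ≤ t) :
    0 < ∑ j, x t j :=
  (Finset.sum_nonneg fun i _ => by
    rw [eq_mul_exp hx i ht]; exact (mul_pos (hx0 i) (exp_pos _)).le).lt_of_ne'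
    (hx.sum_ne_zero t ht)

theorem integral_inv_sum_nonneg
    (hx : IsSolution α β d x) (hx0 : ∀ i, 0 < x 0 i) {t : ℝ} (ht : 0 ≤ t) :
    0 ≤ ∫ s in (0:ℝ)..t, (∑ j, x s j)⁻¹ :=
  intervalIntegral.integral_nonneg ht fun _ hs => (inv_pos.2 (sum_pos hx hx0 hs.1)).le

theorem sum_div_mul_exp_integral
    (hx : IsSolution α β d x) (hα : α ≠ 0) (hβd : ∀ i, β * d i ≠ 0) {t : ℝ} (ht : 0 ≤ t) :
    ∑ i, x 0 i / (β * d i) * exp (β * d i * ∫ s in (0:ℝ)..t, (∑ j, x s j)⁻¹) =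
      ∑ i, x 0 i / (β * d i) + (exp (α * t) - 1) / α := by
  refine eq_of_hasDerivWithinAt_Icc_eq (b := t) (f' := fun u => exp (α * u))
    (f := fun u => ∑ i, x 0 i / (β * d i) * exp (β * d i * ∫ s in (0:ℝ)..u, (∑ j, x s j)⁻¹))
    (g := fun u => ∑ i, x 0 i / (β * d i) + (exp (α * u) - 1) / α)
    (fun u hu => ?_) (fun u _ => ?_) ?_ t ⟨ht, le_rfl⟩
  · have hτ := hasDerivWithinAt_integral_inv_sum hx hu
    refine (HasDerivWithinAt.fun_sum fun i _ =>
      ((hτ.const_mul (β * d i)).exp).const_mul (x 0 i / (β * d i))).congr_deriv ?_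
    calc ∑ i, x 0 i / (β * d i) * (exp (β * d i * _) * (β * d i * (∑ j, x u j)⁻¹))
        = (∑ i, x 0 i * exp (β * d i * ∫ s in (0:ℝ)..u, (∑ j, x s j)⁻¹)) * (∑ j, x u j)⁻¹ := by
          rw [Finset.sum_mul]
          refine Finset.sum_congr rfl fun i _ => ?_
          rw [mul_left_comm (exp _), ← mul_assoc, div_mul_cancel₀ _ (hβd i)]
          exact (mul_assoc _ _ _).symm
      _ = exp (α * u) := by
          rw [← sum_mul_exp hx hu.1]
          field_simp [hx.sum_ne_zero u hu.1]
  · exact ((((hasDerivWithinAt_id u _).const_mul α).exp.sub_const 1).div_const α).const_add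
      _ |>.congr_deriv (by simp [hα])
  · simp

end EigenAnt

theorem stmt9_general
    (n : ℕ) (α β : ℝ) (hα : 0 < α) (hβ : 0 < β)
    (d : Fin n → ℝ) (hdpos : ∀ i, 0 < d i)
    (x : ℝ → Fin n → ℝ)
    (hS : ∀ t : ℝ, 0 ≤ t → (∑ j, x t j) ≠ 0)
    (hode : ∀ (i : Fin n) (t : ℝ), 0 ≤ t →
      HasDerivAt (fun s => x s i) ((-α + β * d i / (∑ j, x t j)) * x t i) t)
    (hx0 : ∀ i, 0 < x 0 i)
    (F : ℝ → ℝ)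
    (hF : ∀ u, F u = ∑ i, x 0 i / (β * d i) * Real.exp (β * d i * u)) :
    ∀ t : ℝ, 0 ≤ t →
      F (∫ s in (0:ℝ)..t, (∑ j, x s j)⁻¹) = F 0 + (Real.exp (α * t) - 1) / α ∧
      0 ≤ ∫ s in (0:ℝ)..t, (∑ j, x s j)⁻¹ ∧
      ∀ u : ℝ, 0 ≤ u → F u = F 0 + (Real.exp (α * t) - 1) / α →
        u = ∫ s in (0:ℝ)..t, (∑ j, x s j)⁻¹ := by
  intro t ht
  have hx : EigenAnt.IsSolution α β d x := ⟨hS, hode⟩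
  have : Nonempty (Fin n) :=
    Finset.univ_nonempty_iff.mp (Finset.nonempty_of_sum_ne_zero (hS 0 le_rfl))
  have hβd (i : Fin n) : 0 < β * d i := mul_pos hβ (hdpos i)
  have hFmono : StrictMono F := by
    simpa only [← hF] using strictMono_sum_mul_exp (fun i => div_pos (hx0 i) (hβd i)) hβd
  have hidentity : F (∫ s in (0:ℝ)..t, (∑ j, x s j)⁻¹) = F 0 + (exp (α * t) - 1) / α := by
    simpa only [hF, mul_zero, exp_zero, mul_one] using
      EigenAnt.sum_div_mul_exp_integral hx hα.ne' (fun i => (hβd i).ne') ht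
  exact ⟨hidentity, EigenAnt.integral_inv_sum_nonneg hx hx0 ht,
    fun u _ hu => hFmono.injective (hu.trans hidentity.symm)⟩

theorem stmt9
    (n : ℕ) (hn : 0 < n) (α β : ℝ) (hα : 0 < α) (hβ : 0 < β)
    (d : Fin n → ℝ) (hd : ∀ i j : Fin n, i ≤ j → d j ≤ d i) (hdpos : ∀ i, 0 < d i)
    (x : ℝ → Fin n → ℝ)
    (hS : ∀ t : ℝ, 0 ≤ t → (∑ j, x t j) ≠ 0)
    (hode : ∀ (i : Fin n) (t : ℝ), 0 ≤ t →
      HasDerivAt (fun s => x s i) ((-α + β * d i / (∑ j, x t j)) * x t i) t)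
    (hx0 : ∀ i, 0 < x 0 i)
    (F : ℝ → ℝ)
    (hF : ∀ u, F u = ∑ i, x 0 i / (β * d i) * Real.exp (β * d i * u)) :
    ∀ t : ℝ, 0 ≤ t →
      F (∫ s in (0:ℝ)..t, (∑ j, x s j)⁻¹) = F 0 + (Real.exp (α * t) - 1) / α ∧
      0 ≤ ∫ s in (0:ℝ)..t, (∑ j, x s j)⁻¹ ∧
      ∀ u : ℝ, 0 ≤ u → F u = F 0 + (Real.exp (α * t) - 1) / α →
        u = ∫ s in (0:ℝ)..t, (∑ j, x s j)⁻¹ :=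
  stmt9_general n α β hα hβ d hdpos x hS hode hx0 F hF
end

section
/- For any solution x of the EigenAnt dynamics with positive initial conditions, the sum S(t) := Σ_{j=1}^n x_j(t) admits a positive finite limit as t → +∞. -/
/-!
Let `u` be the primitive of `1 / S` on `[0, ∞)` with `u 0 = 0`. Each coordinate then solves a
scalar linear equation, `x_i(t) = e^{-αt} x_i(0) e^{β u(t) d_i}`, so `S' = -α S + β m(β u)`,
where `m(v)` is the mean of `d` under the weights `x_i(0) e^{v d_i}`. As `m ≤ d_1`, `S` stays below
`max (S 0) (β d_1 / α)`, so `u' = 1 / S` is bounded below and `u → ∞`. The tilted mean then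
concentrates on the largest value, `m(β u) → d_1`, and the linear equation `S' = -α S + g` with
`g → β d_1` forces `S → β d_1 / α > 0`.
-/

open Filter Set Real Topology

lemma pos_of_continuousOn_Ici_of_ne_zero {f : ℝ → ℝ} {a : ℝ} (hf : ContinuousOn f (Ici a))
    (ha : 0 < f a) (hne : ∀ t, a ≤ t → f t ≠ 0) {t : ℝ} (ht : a ≤ t) : 0 < f t := by
  by_contra! hft
  obtain ⟨s, hs, hfs⟩ : ∃ s ∈ Icc a t, f s = 0 :=
    intermediate_value_Icc' ht (hf.mono Icc_subset_Ici_self) ⟨hft, ha.le⟩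
  exact hne s hs.1 hfs

lemma exists_hasDerivAt_of_continuousOn_Ici {f : ℝ → ℝ} {a : ℝ}
    (hf : ContinuousOn f (Ici a)) :
    ∃ F : ℝ → ℝ, ∀ t, a ≤ t → HasDerivAt F (f t) t := by
  have hcont : Continuous fun t => f (max t a) :=
    hf.comp_continuous (continuous_id.max continuous_const) fun t => le_max_right t a
  refine ⟨fun t => ∫ τ in a..t, f (max τ a), fun t ht => ?_⟩
  simpa [max_eq_left ht] using (hcont.integral_hasStrictDerivAt a t).hasDerivAt

lemma eq_mul_exp_of_hasDerivAt_mul {f φ φ' : ℝ → ℝ} {a t : ℝ}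
    (hf : ∀ s, a ≤ s → HasDerivAt f (φ' s * f s) s)
    (hφ : ∀ s, a ≤ s → HasDerivAt φ (φ' s) s) (ht : a ≤ t) :
    f t = f a * exp (φ t - φ a) := by
  have hderiv : ∀ s, a ≤ s → HasDerivAt (fun s => f s * exp (-φ s)) 0 s := fun s hs =>
    ((hf s hs).fun_mul (hφ s hs).fun_neg.exp).congr_deriv (by ring)
  have hconst := constant_of_has_deriv_right_zero
    (fun s hs => (hderiv s hs.1).continuousAt.continuousWithinAt)
    (fun s hs => (hderiv s hs.1).hasDerivWithinAt) t ⟨ht, le_rfl⟩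
  rw [sub_eq_add_neg, exp_add, mul_left_comm, ← hconst, mul_left_comm, ← exp_add]
  simp

lemma tendsto_atTop_of_hasDerivAt_ge {u u' : ℝ → ℝ} {a c : ℝ} (hc : 0 < c)
    (hu : ∀ t, a ≤ t → HasDerivAt u (u' t) t) (hle : ∀ t, a ≤ t → c ≤ u' t) :
    Tendsto u atTop atTop := by
  have hg : ∀ t, a ≤ t → HasDerivAt (fun t => u t - c * t) (u' t - c) t := fun t ht =>
    ((hu t ht).sub ((hasDerivAt_id' t).const_mul c)).congr_deriv (by rw [mul_one])
  have hmono : MonotoneOn (fun t => u t - c * t) (Ici a) :=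
    monotoneOn_of_hasDerivWithinAt_nonneg (convex_Ici a)
      (fun t ht => (hg t ht).continuousAt.continuousWithinAt)
      (fun t ht => (hg t (interior_subset ht)).hasDerivWithinAt)
      (fun t ht => sub_nonneg.2 (hle t (interior_subset ht)))
  refine tendsto_atTop_mono' atTop ?_
    (tendsto_atTop_add_const_right _ (u a - c * a) (tendsto_id.const_mul_atTop hc))
  filter_upwards [eventually_ge_atTop a] with t ht
  have := hmono self_mem_Ici ht ht
  simp only [id] at this ⊢
  linarith

section LinearComparison

variable {S S' : ℝ → ℝ} {α C T : ℝ}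

lemma sub_div_le_mul_exp_of_deriv_le (hα : α ≠ 0)
    (hS : ∀ s, T ≤ s → HasDerivAt S (S' s) s) (hS' : ∀ s, T ≤ s → S' s ≤ C - α * S s)
    {t : ℝ} (ht : T ≤ t) :
    S t - C / α ≤ (S T - C / α) * exp (-α * (t - T)) := by
  have hderiv : ∀ s, T ≤ s → HasDerivAt (fun s => (S s - C / α) * exp (α * s))
      ((S' s + α * S s - C) * exp (α * s)) s := fun s hs =>
    (((hS s hs).sub_const (C / α)).mul (((hasDerivAt_id s).const_mul α).exp)).congr_deriv (by
      simp only [id]; field_simp; ring)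
  have hanti : AntitoneOn (fun s => (S s - C / α) * exp (α * s)) (Ici T) :=
    antitoneOn_of_hasDerivWithinAt_nonpos (convex_Ici T)
      (fun s hs => (hderiv s hs).continuousAt.continuousWithinAt)
      (fun s hs => (hderiv s (interior_subset hs)).hasDerivWithinAt)
      (fun s hs => mul_nonpos_of_nonpos_of_nonneg
        (by linarith [hS' s (interior_subset hs)]) (exp_pos _).le)
  have key : (S t - C / α) * exp (α * t) ≤ (S T - C / α) * exp (α * T) :=
    hanti self_mem_Ici ht ht
  have hsplit : exp (α * T) = exp (-α * (t - T)) * exp (α * t) := by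
    rw [← exp_add]; ring_nf
  rw [hsplit, ← mul_assoc] at key
  exact le_of_mul_le_mul_right key (exp_pos _)

lemma le_max_of_deriv_le (hα : 0 < α) (hS : ∀ s, T ≤ s → HasDerivAt S (S' s) s)
    (hS' : ∀ s, T ≤ s → S' s ≤ C - α * S s) {t : ℝ} (ht : T ≤ t) :
    S t ≤ max (S T) (C / α) := by
  have hbound := sub_div_le_mul_exp_of_deriv_le hα.ne' hS hS' ht
  have hexp_le : exp (-α * (t - T)) ≤ 1 := exp_le_one_iff.2 (by nlinarith)
  rcases le_total (S T) (C / α) with h | h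
  · nlinarith [exp_pos (-α * (t - T)), le_max_right (S T) (C / α)]
  · nlinarith [le_max_left (S T) (C / α)]

lemma eventually_lt_of_deriv_le (hα : 0 < α) (hS : ∀ s, T ≤ s → HasDerivAt S (S' s) s)
    (hS' : ∀ s, T ≤ s → S' s ≤ C - α * S s) {a : ℝ} (ha : C / α < a) :
    ∀ᶠ t in atTop, S t < a := by
  have hexp : Tendsto (fun t => exp (-α * (t - T))) atTop (𝓝 0) :=
    tendsto_exp_atBot.comp ((tendsto_atTop_add_const_right _ (-T) tendsto_id).const_mul_atTop_of_neg
      (neg_lt_zero.2 hα))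
  have hbound : Tendsto (fun t => C / α + (S T - C / α) * exp (-α * (t - T))) atTop
      (𝓝 (C / α)) := by
    simpa using (hexp.const_mul (S T - C / α)).const_add (C / α)
  filter_upwards [hbound.eventually_lt_const ha, eventually_ge_atTop T] with t hlt ht
  linarith [sub_div_le_mul_exp_of_deriv_le hα.ne' hS hS' ht]

lemma tendsto_of_hasDerivAt_neg_mul_add {g : ℝ → ℝ} {ℓ : ℝ} (hα : 0 < α)
    (hS : ∀ t, T ≤ t → HasDerivAt S (-α * S t + g t) t) (hg : Tendsto g atTop (𝓝 ℓ)) :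
    Tendsto S atTop (𝓝 (ℓ / α)) := by
  rw [tendsto_order]
  constructor
  · intro a ha
    obtain ⟨C, haC, hCℓ⟩ : ∃ C, α * a < C ∧ C < ℓ :=
      exists_between ((lt_div_iff₀' hα).1 ha)
    obtain ⟨T', hT'⟩ := eventually_atTop.1 (hg.eventually (eventually_gt_nhds hCℓ))
    have := eventually_lt_of_deriv_le (S := fun t => -S t) (C := -C) (T := max T T') hα
      (fun s hs => (hS s (le_of_max_le_left hs)).neg)
      (fun s hs => by linarith [hT' s (le_of_max_le_right hs)])
      (a := -a) (by rw [neg_div, neg_lt_neg_iff, lt_div_iff₀' hα]; exact haC)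
    exact this.mono fun t ht => neg_lt_neg_iff.1 ht
  · intro a ha
    obtain ⟨C, hℓC, hCa⟩ : ∃ C, ℓ < C ∧ C < α * a :=
      exists_between ((div_lt_iff₀' hα).1 ha)
    obtain ⟨T', hT'⟩ := eventually_atTop.1 (hg.eventually (eventually_lt_nhds hℓC))
    exact eventually_lt_of_deriv_le (C := C) (T := max T T') hα
      (fun s hs => hS s (le_of_max_le_left hs))
      (fun s hs => by linarith [hT' s (le_of_max_le_right hs)])
      (by rwa [div_lt_iff₀' hα])

end LinearComparison

section ExpTiltedMean

variable {ι : Type*} [Fintype ι] {w d : ι → ℝ}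

noncomputable def expTiltedMean (w d : ι → ℝ) (v : ℝ) : ℝ :=
  (∑ i, d i * (w i * exp (v * d i))) / ∑ i, w i * exp (v * d i)

lemma expTiltedMean_eq_of_eq_const_mul {y : ι → ℝ} {c v : ℝ} (hc : c ≠ 0)
    (hy : ∀ i, y i = c * (w i * exp (v * d i))) :
    (∑ i, d i * y i) / ∑ i, y i = expTiltedMean w d v := by
  simp only [hy, mul_left_comm (d _) c, ← Finset.mul_sum]
  exact mul_div_mul_left _ _ hc

lemma expTiltedMean_le (hw : ∀ i, 0 ≤ w i) {i₀ : ι} (hi₀ : 0 < w i₀)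
    (hmax : ∀ i, d i ≤ d i₀) (v : ℝ) : expTiltedMean w d v ≤ d i₀ := by
  have hden : 0 < ∑ i, w i * exp (v * d i) :=
    Finset.sum_pos' (fun i _ => mul_nonneg (hw i) (exp_pos _).le)
      ⟨i₀, Finset.mem_univ _, mul_pos hi₀ (exp_pos _)⟩
  rw [expTiltedMean, div_le_iff₀ hden, Finset.mul_sum]
  exact Finset.sum_le_sum fun i _ =>
    mul_le_mul_of_nonneg_right (hmax i) (mul_nonneg (hw i) (exp_pos _).le)

lemma tendsto_expTiltedMean_atTop (hw : ∀ i, 0 ≤ w i) {i₀ : ι} (hi₀ : 0 < w i₀)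
    (hmax : ∀ i, d i ≤ d i₀) : Tendsto (expTiltedMean w d) atTop (𝓝 (d i₀)) := by
  set w' : ι → ℝ := fun i => if d i = d i₀ then w i else 0
  have hterm : ∀ i, Tendsto (fun v => w i * exp (v * (d i - d i₀))) atTop (𝓝 (w' i)) := by
    intro i
    by_cases h : d i = d i₀
    · simp [w', h]
    · have hneg : d i - d i₀ < 0 := sub_neg.2 (lt_of_le_of_ne (hmax i) h)
      simpa [w', h] using
        (tendsto_exp_atBot.comp (tendsto_id.atTop_mul_const_of_neg hneg)).const_mul (w i)
  have hA : 0 < ∑ i, w' i :=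
    Finset.sum_pos' (fun i _ => by simp only [w']; split_ifs <;> simp [hw i])
      ⟨i₀, Finset.mem_univ _, by simpa [w'] using hi₀⟩
  have hnum : ∑ i, d i * w' i = d i₀ * ∑ i, w' i := by
    rw [Finset.mul_sum]
    exact Finset.sum_congr rfl fun i _ => by simp only [w']; split_ifs with h <;> simp [h]
  have hlim := (tendsto_finsetSum Finset.univ fun i _ => (hterm i).const_mul (d i)).div
    (tendsto_finsetSum Finset.univ fun i _ => hterm i) hA.ne'
  rw [hnum, mul_div_cancel_right₀ _ hA.ne'] at hlim
  refine hlim.congr fun v =>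
    expTiltedMean_eq_of_eq_const_mul (exp_ne_zero (-(v * d i₀))) fun i => ?_
  rw [mul_left_comm, ← exp_add]
  ring_nf

end ExpTiltedMean

section EigenAnt

variable {ι : Type*} [Fintype ι] {α β : ℝ} {d : ι → ℝ} {x : ℝ → ι → ℝ}
  {u : ℝ → ℝ}

lemma eigenAnt_eq_exp_mul_exp
    (hode : ∀ (i : ι) (t : ℝ), 0 ≤ t →
      HasDerivAt (fun s => x s i) ((-α + β * d i / (∑ j, x t j)) * x t i) t)
    (hu : ∀ t, 0 ≤ t → HasDerivAt u (∑ j, x t j)⁻¹ t) (i : ι) {t : ℝ} (ht : 0 ≤ t) :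
    x t i = exp (-α * t) * (x 0 i * exp (β * (u t - u 0) * d i)) := by
  have hφ : ∀ s, 0 ≤ s → HasDerivAt (fun s => β * d i * u s - α * s)
      (β * d i * (∑ j, x s j)⁻¹ - α) s := fun s hs =>
    ((hu s hs).const_mul (β * d i)).sub (((hasDerivAt_id s).const_mul α).congr_deriv (mul_one α))
  rw [eq_mul_exp_of_hasDerivAt_mul (fun s hs => (hode i s hs).congr_deriv (by ring)) hφ ht,
    mul_left_comm, ← exp_add]
  ring_nf

lemma eigenAnt_hasDerivAt_sum
    (hode : ∀ (i : ι) (t : ℝ), 0 ≤ t →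
      HasDerivAt (fun s => x s i) ((-α + β * d i / (∑ j, x t j)) * x t i) t)
    (hu : ∀ t, 0 ≤ t → HasDerivAt u (∑ j, x t j)⁻¹ t) (t : ℝ) (ht : 0 ≤ t) :
    HasDerivAt (fun s => ∑ j, x s j)
      (-α * ∑ j, x t j + β * expTiltedMean (x 0) d (β * (u t - u 0))) t := by
  have hmean : (∑ j, d j * x t j) / ∑ j, x t j = expTiltedMean (x 0) d (β * (u t - u 0)) :=
    expTiltedMean_eq_of_eq_const_mul (exp_ne_zero _) fun i => eigenAnt_eq_exp_mul_exp hode hu i ht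
  refine (HasDerivAt.fun_sum fun i _ => hode i t ht).congr_deriv ?_
  rw [← hmean, Finset.mul_sum, Finset.sum_div, Finset.mul_sum, ← Finset.sum_add_distrib]
  exact Finset.sum_congr rfl fun j _ => by ring

end EigenAnt

theorem stmt10
    (n : ℕ) (hn : 0 < n) (α β : ℝ) (hα : 0 < α) (hβ : 0 < β)
    (d : Fin n → ℝ) (hd : ∀ i j : Fin n, i ≤ j → d j ≤ d i) (hdpos : ∀ i, 0 < d i)
    (x : ℝ → Fin n → ℝ)
    (hS : ∀ t : ℝ, 0 ≤ t → (∑ j, x t j) ≠ 0)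
    (hode : ∀ (i : Fin n) (t : ℝ), 0 ≤ t →
      HasDerivAt (fun s => x s i) ((-α + β * d i / (∑ j, x t j)) * x t i) t)
    (hx0 : ∀ i, 0 < x 0 i)
    :
    ∃ L : ℝ, 0 < L ∧ Tendsto (fun t => ∑ j, x t j) atTop (nhds L) := by
  set S : ℝ → ℝ := fun t => ∑ j, x t j
  let i₀ : Fin n := ⟨0, hn⟩
  have hmax : ∀ i, d i ≤ d i₀ := fun i => hd i₀ i (Nat.zero_le _)
  have hScont : ContinuousOn S (Ici 0) := fun t ht =>
    (HasDerivAt.fun_sum fun i _ => hode i t ht).continuousAt.continuousWithinAt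
  have hS0 : 0 < S 0 := Finset.sum_pos (fun i _ => hx0 i) ⟨i₀, Finset.mem_univ _⟩
  obtain ⟨u, hu⟩ := exists_hasDerivAt_of_continuousOn_Ici (hScont.inv₀ hS)
  have hder := eigenAnt_hasDerivAt_sum hode hu
  have hbdd : ∀ t, 0 ≤ t → S t ≤ max (S 0) (β * d i₀ / α) := fun t =>
    le_max_of_deriv_le hα hder fun s _ => by
      nlinarith [expTiltedMean_le (fun i => (hx0 i).le) (hx0 i₀) hmax (β * (u s - u 0))]
  have hu_top : Tendsto u atTop atTop :=
    tendsto_atTop_of_hasDerivAt_ge (inv_pos.2 (hS0.trans_le (le_max_left _ _))) hu fun t ht =>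
      inv_anti₀ (pos_of_continuousOn_Ici_of_ne_zero hScont hS0 hS ht) (hbdd t ht)
  have hmean := ((tendsto_expTiltedMean_atTop (fun i => (hx0 i).le) (hx0 i₀) hmax).comp
    ((tendsto_atTop_add_const_right _ (-u 0) hu_top).const_mul_atTop hβ)).const_mul β
  exact ⟨β * d i₀ / α, by have := hdpos i₀; positivity,
    tendsto_of_hasDerivAt_neg_mul_add hα hder (by simpa [← sub_eq_add_neg] using hmean)⟩
end

section
/- For any solution x of the EigenAnt dynamics with positive initial conditions, every component corresponding to a shortest path converges to a positive limit proportional to its initial value: for every index i with d_i = d_1, one has x_i(t) → x_i(0)/(α σ_1) as t → +∞, where σ_1 := (1/(β d_1)) Σ_{j : d_j = d_1} x_j(0). Consequently, for any two indices i, i′ with d_i = d_{i′} = d_1, the ratio of the limits of x_i and x_{i′} equals x_i(0)/x_{i′}(0). -/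
/-! With the clock `φ(t) = ∫₀ᵗ ds / S(s)` every component is explicit,
`xᵢ(t) = xᵢ(0) exp(-αt + β dᵢ φ(t))`, so all components stay positive. The total mass obeys
`S' = -αS + β (Σ dⱼ xⱼ) / S` with forcing in `[0, β d₁]`, hence stays bounded, and so `φ` grows
at least linearly. Consequently `xⱼ / xᵢ → 0` when `dⱼ < dᵢ = d₁` while `xⱼ / xᵢ` is constant when
`dⱼ = dᵢ`, i.e. `S / xᵢ → Σ_{dⱼ = d₁} xⱼ(0) / xᵢ(0)`. Finally `xᵢ' = -α xᵢ + β d₁ xᵢ / S` is a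
linear equation whose forcing converges, so `xᵢ` converges to the forcing's limit divided by `α`. -/

open Filter Set Real Topology

theorem eq_mul_exp_sub_of_hasDerivAt {y A a : ℝ → ℝ}
    (hA : ∀ t, 0 ≤ t → HasDerivAt A (a t) t) (hy : ∀ t, 0 ≤ t → HasDerivAt y (a t * y t) t)
    {t : ℝ} (ht : 0 ≤ t) : y t = y 0 * exp (A t - A 0) := by
  have hderiv : ∀ s, 0 ≤ s → HasDerivAt (fun s => y s * exp (-A s)) 0 s := fun s hs =>
    ((hy s hs).mul (hA s hs).neg.exp).congr_deriv (by ring)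
  have hconst := constant_of_has_deriv_right_zero
    (fun s hs => (hderiv s hs.1).continuousAt.continuousWithinAt)
    (fun s hs => (hderiv s hs.1).hasDerivWithinAt) t ⟨ht, le_rfl⟩
  calc y t = y t * exp (-A t) * exp (A t) := by rw [mul_assoc, ← exp_add]; simp
    _ = y 0 * exp (A t - A 0) := by rw [hconst, mul_assoc, ← exp_add]; ring_nf

theorem abs_sub_div_le_of_hasDerivAt_eq_neg_mul_add {u r : ℝ → ℝ} {α L δ T t : ℝ} (hα : 0 < α)
    (hu : ∀ s, T ≤ s → HasDerivAt u (-α * u s + r s) s) (hr : ∀ s, T ≤ s → |r s - L| ≤ δ)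
    (ht : T ≤ t) :
    |u t - L / α| ≤ exp (-(α * (t - T))) * |u T - L / α| + δ / α := by
  -- variation of constants: `|w'| ≤ δ e^{α(s-T)}`, the derivative of the barrier in `hB`
  set w : ℝ → ℝ := fun s => exp (α * (s - T)) * (u s - L / α)
  have hw : ∀ s, T ≤ s → HasDerivAt w (exp (α * (s - T)) * (r s - L)) s := fun s hs => by
    refine ((((hasDerivAt_id s).sub_const T).const_mul α).exp.mul
      ((hu s hs).sub_const (L / α))).congr_deriv ?_
    simp only [id]
    field_simp
    ring
  have hB : ∀ s, HasDerivAt (fun s => |w T| + δ * (exp (α * (s - T)) - 1) / α)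
      (δ * exp (α * (s - T))) s := fun s => by
    refine (((((hasDerivAt_id s).sub_const T).const_mul α).exp.sub_const 1).const_mul δ
      |>.div_const α |>.const_add |w T|).congr_deriv ?_
    simp only [id]
    field_simp
  have hwt := image_norm_le_of_norm_deriv_right_le_deriv_boundary
    (fun s hs => (hw s hs.1).continuousAt.continuousWithinAt)
    (fun s hs => (hw s hs.1).hasDerivWithinAt) (by simp) hB
    (fun s hs => by
      rw [norm_mul, Real.norm_of_nonneg (exp_pos _).le, mul_comm δ]
      exact mul_le_mul_of_nonneg_left (hr s hs.1) (exp_pos _).le) ⟨ht, le_rfl⟩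
  have hδ : 0 ≤ δ := (abs_nonneg _).trans (hr T le_rfl)
  have hwT : |w T| = |u T - L / α| := by simp [w]
  have hut : |u t - L / α| = exp (-(α * (t - T))) * ‖w t‖ := by
    rw [Real.norm_eq_abs, abs_mul, abs_of_pos (exp_pos _), ← mul_assoc, ← exp_add]
    simp
  rw [hwT] at hwt
  rw [hut]
  calc exp (-(α * (t - T))) * ‖w t‖
      ≤ exp (-(α * (t - T))) * (|u T - L / α| + δ * (exp (α * (t - T)) - 1) / α) :=
        mul_le_mul_of_nonneg_left hwt (exp_pos _).le
    _ = exp (-(α * (t - T))) * |u T - L / α| + δ / α - exp (-(α * (t - T))) * δ / α := by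
        rw [exp_neg]; field_simp; ring
    _ ≤ exp (-(α * (t - T))) * |u T - L / α| + δ / α := by
        have : 0 ≤ exp (-(α * (t - T))) * δ / α := by positivity
        linarith

theorem tendsto_of_hasDerivAt_eq_neg_mul_add {u r : ℝ → ℝ} {α L : ℝ} (hα : 0 < α)
    (hu : ∀ᶠ t in atTop, HasDerivAt u (-α * u t + r t) t) (hr : Tendsto r atTop (𝓝 L)) :
    Tendsto u atTop (𝓝 (L / α)) := by
  rw [Metric.tendsto_atTop]
  intro ε hε
  obtain ⟨T₁, hT₁⟩ := eventually_atTop.1 hu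
  obtain ⟨T₂, hT₂⟩ := Metric.tendsto_atTop.1 hr (α * ε / 2) (by positivity)
  set T := max T₁ T₂
  have hdecay : Tendsto (fun t => exp (-(α * (t - T))) * |u T - L / α|) atTop (𝓝 0) := by
    simpa [sub_eq_add_neg] using (tendsto_exp_atBot.comp (tendsto_neg_atTop_atBot.comp
      ((tendsto_atTop_add_const_right _ (-T) tendsto_id).const_mul_atTop hα))).mul_const
        |u T - L / α|
  obtain ⟨T₃, hT₃⟩ := eventually_atTop.1 ((tendsto_order.1 hdecay).2 (ε / 2) (by positivity))
  refine ⟨max T T₃, fun t ht => ?_⟩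
  have hbound := abs_sub_div_le_of_hasDerivAt_eq_neg_mul_add hα
    (fun s hs => hT₁ s ((le_max_left _ _).trans hs))
    (fun s hs => (Real.dist_eq _ _ ▸ hT₂ s ((le_max_right _ _).trans hs)).le)
    (le_of_max_le_left ht)
  have hsmall := hT₃ t (le_of_max_le_right ht)
  rw [Real.dist_eq]
  calc |u t - L / α| ≤ _ := hbound
    _ < ε / 2 + α * ε / 2 / α := by gcongr
    _ = ε := by field_simp; ring

theorem exists_hasDerivAt_eq_of_continuousOn_Ici {g : ℝ → ℝ} (hg : ContinuousOn g (Ici 0)) :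
    ∃ φ : ℝ → ℝ, φ 0 = 0 ∧ ∀ t, 0 ≤ t → HasDerivAt φ (g t) t := by
  -- freezing `g` left of `0` makes the primitive differentiable at `0` itself
  have hG : Continuous fun s => g (max s 0) :=
    hg.comp_continuous (continuous_id.max continuous_const) fun s => le_max_right s 0
  refine ⟨fun t => ∫ s in (0 : ℝ)..t, g (max s 0), intervalIntegral.integral_same,
    fun t ht => ?_⟩
  simpa [max_eq_left ht] using intervalIntegral.integral_hasDerivAt_right
    (hG.intervalIntegrable 0 t) hG.aestronglyMeasurable.stronglyMeasurableAtFilter hG.continuousAt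

theorem tendsto_atTop_of_hasDerivAt_ge_s13 {φ φ' : ℝ → ℝ} {c : ℝ} (hc : 0 < c)
    (hφ : ∀ t, 0 ≤ t → HasDerivAt φ (φ' t) t) (hge : ∀ t, 0 ≤ t → c ≤ φ' t) :
    Tendsto φ atTop atTop := by
  have hlow : ∀ t, 0 ≤ t → φ 0 + c * t ≤ φ t := fun t ht =>
    image_le_of_deriv_right_le_deriv_boundary (f' := fun _ => c)
      (fun s _ => (continuous_const.add (continuous_const.mul continuous_id)).continuousWithinAt)
      (fun s _ => (((hasDerivAt_id s).const_mul c).const_add (φ 0)).hasDerivWithinAt.congr_deriv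
        (mul_one c))
      (by simp) (fun s hs => (hφ s hs.1).continuousAt.continuousWithinAt)
      (fun s hs => (hφ s hs.1).hasDerivWithinAt) (fun s hs => hge s hs.1) ⟨ht, le_rfl⟩
  exact tendsto_atTop_mono' atTop (eventually_atTop.2 ⟨0, hlow⟩)
    (tendsto_atTop_add_const_left _ _ (tendsto_id.const_mul_atTop hc))

section EigenAnt

variable {ι : Type*} [Fintype ι] {α β D : ℝ} {d : ι → ℝ} {x : ℝ → ι → ℝ} {φ : ℝ → ℝ}

def IsEigenAntSolution (α β : ℝ) (d : ι → ℝ) (x : ℝ → ι → ℝ) : Prop :=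
  ∀ (i : ι) (t : ℝ), 0 ≤ t →
    HasDerivAt (fun s => x s i) ((-α + β * d i / (∑ j, x t j)) * x t i) t

/-- `φ(t) = ∫₀ᵗ ds / S(s)`, the time change that linearises the dynamics. -/
def IsEigenAntClock (x : ℝ → ι → ℝ) (φ : ℝ → ℝ) : Prop :=
  φ 0 = 0 ∧ ∀ t, 0 ≤ t → HasDerivAt φ (∑ j, x t j)⁻¹ t

theorem IsEigenAntSolution.eq_mul_exp (hx : IsEigenAntSolution α β d x)
    (hφ : IsEigenAntClock x φ) (i : ι) {t : ℝ} (ht : 0 ≤ t) :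
    x t i = x 0 i * exp (-α * t + β * d i * φ t) := by
  have hA : ∀ s, 0 ≤ s → HasDerivAt (fun s => -α * s + β * d i * φ s)
      (-α + β * d i / ∑ j, x s j) s := fun s hs =>
    (((hasDerivAt_id s).const_mul (-α)).add ((hφ.2 s hs).const_mul (β * d i))).congr_deriv
      (by simp [div_eq_mul_inv])
  simpa [hφ.1] using eq_mul_exp_sub_of_hasDerivAt hA (hx i) ht

theorem IsEigenAntSolution.pos (hx : IsEigenAntSolution α β d x)
    (hφ : IsEigenAntClock x φ) {i : ι} (hx0 : 0 < x 0 i) {t : ℝ} (ht : 0 ≤ t) : 0 < x t i := by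
  rw [hx.eq_mul_exp hφ i ht]
  positivity

theorem IsEigenAntSolution.sum_pos [Nonempty ι] (hx : IsEigenAntSolution α β d x)
    (hφ : IsEigenAntClock x φ) (hx0 : ∀ i, 0 < x 0 i) {t : ℝ} (ht : 0 ≤ t) : 0 < ∑ j, x t j :=
  Finset.sum_pos (fun j _ => hx.pos hφ (hx0 j) ht) Finset.univ_nonempty

theorem IsEigenAntSolution.sum_le [Nonempty ι] (hx : IsEigenAntSolution α β d x)
    (hφ : IsEigenAntClock x φ) (hα : 0 < α) (hβ : 0 ≤ β) (hd0 : ∀ j, 0 ≤ d j)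
    (hdD : ∀ j, d j ≤ D) (hx0 : ∀ i, 0 < x 0 i) {t : ℝ} (ht : 0 ≤ t) :
    ∑ j, x t j ≤ ∑ j, x 0 j + β * D / α := by
  have hpos : ∀ s, 0 ≤ s → 0 < ∑ j, x s j := fun s hs => hx.sum_pos hφ hx0 hs
  have hderiv : ∀ s, 0 ≤ s → HasDerivAt (fun s => ∑ j, x s j)
      (-α * (∑ j, x s j) + β * (∑ j, d j * x s j) / ∑ j, x s j) s := fun s hs => by
    refine (HasDerivAt.fun_sum fun j _ => hx j s hs).congr_deriv ?_
    rw [Finset.mul_sum, Finset.mul_sum, Finset.sum_div, ← Finset.sum_add_distrib]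
    exact Finset.sum_congr rfl fun j _ => by ring
  have hforce : ∀ s, 0 ≤ s → |β * (∑ j, d j * x s j) / (∑ j, x s j) - 0| ≤ β * D := by
    intro s hs
    have hxs : ∀ j, 0 < x s j := fun j => hx.pos hφ (hx0 j) hs
    have hweighted : 0 ≤ ∑ j, d j * x s j :=
      Finset.sum_nonneg fun j _ => mul_nonneg (hd0 j) (hxs j).le
    have hle : ∑ j, d j * x s j ≤ D * ∑ j, x s j := by
      rw [Finset.mul_sum]
      exact Finset.sum_le_sum fun j _ => mul_le_mul_of_nonneg_right (hdD j) (hxs j).le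
    rw [sub_zero, abs_of_nonneg (by have := hpos s hs; positivity), mul_div_assoc]
    exact mul_le_mul_of_nonneg_left (div_le_of_le_mul₀ (hpos s hs).le
      ((hd0 _).trans (hdD (Classical.arbitrary ι))) hle) hβ
  have hbound := abs_sub_div_le_of_hasDerivAt_eq_neg_mul_add hα hderiv hforce ht
  simp only [zero_div, sub_zero, abs_of_pos (hpos t ht), abs_of_pos (hpos 0 le_rfl)] at hbound
  have hdecay : exp (-(α * t)) ≤ 1 := exp_le_one_iff.2 (by nlinarith)
  nlinarith [hpos 0 le_rfl]

theorem IsEigenAntSolution.tendsto_clock_atTop [Nonempty ι] (hx : IsEigenAntSolution α β d x)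
    (hφ : IsEigenAntClock x φ) (hα : 0 < α) (hβ : 0 ≤ β) (hd0 : ∀ j, 0 ≤ d j)
    (hdD : ∀ j, d j ≤ D) (hx0 : ∀ i, 0 < x 0 i) :
    Tendsto φ atTop atTop := by
  have hD : 0 ≤ D := (hd0 _).trans (hdD (Classical.arbitrary ι))
  have hM : 0 < ∑ j, x 0 j + β * D / α := by
    have := hx.sum_pos hφ hx0 le_rfl
    positivity
  exact tendsto_atTop_of_hasDerivAt_ge_s13 (inv_pos.2 hM) hφ.2 fun t ht =>
    inv_anti₀ (hx.sum_pos hφ hx0 ht) (hx.sum_le hφ hα hβ hd0 hdD hx0 ht)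

theorem IsEigenAntSolution.tendsto_div (hx : IsEigenAntSolution α β d x)
    (hφ : IsEigenAntClock x φ) (hβ : 0 < β) (hφtop : Tendsto φ atTop atTop) {i j : ι}
    (hj : d j ≤ d i) :
    Tendsto (fun t => x t j / x t i) atTop (𝓝 (if d j = d i then x 0 j / x 0 i else 0)) := by
  have hform : (fun t => x 0 j / x 0 i * exp (β * (d j - d i) * φ t)) =ᶠ[atTop]
      fun t => x t j / x t i := by
    filter_upwards [eventually_ge_atTop 0] with t ht
    rw [hx.eq_mul_exp hφ i ht, hx.eq_mul_exp hφ j ht, mul_div_mul_comm, ← exp_sub]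
    ring_nf
  refine Tendsto.congr' hform ?_
  split_ifs with h
  · simp [h]
  · have hneg : β * (d j - d i) < 0 := mul_neg_of_pos_of_neg hβ (sub_neg.2 (hj.lt_of_ne h))
    simpa using (tendsto_exp_atBot.comp (hφtop.const_mul_atTop_of_neg hneg)).const_mul
      (x 0 j / x 0 i)

theorem IsEigenAntSolution.tendsto_of_forall_le (hx : IsEigenAntSolution α β d x)
    (hφ : IsEigenAntClock x φ) (hα : 0 < α) (hβ : 0 < β) (hφtop : Tendsto φ atTop atTop)
    (hx0 : ∀ i, 0 < x 0 i) {i : ι} (hmax : ∀ j, d j ≤ d i) :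
    Tendsto (fun t => x t i) atTop
      (𝓝 (β * d i / ((∑ j ∈ Finset.univ.filter (fun j => d j = d i), x 0 j) / x 0 i) / α)) := by
  have hratio : Tendsto (fun t => (∑ j, x t j) / x t i) atTop
      (𝓝 ((∑ j ∈ Finset.univ.filter (fun j => d j = d i), x 0 j) / x 0 i)) := by
    simp only [Finset.sum_div, Finset.sum_filter]
    exact tendsto_finsetSum _ fun j _ => by
      simpa [apply_ite (· / x 0 i)] using hx.tendsto_div hφ hβ hφtop (hmax j)
  have hA : 0 < ∑ j ∈ Finset.univ.filter (fun j => d j = d i), x 0 j :=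
    Finset.sum_pos (fun j _ => hx0 j) ⟨i, by simp⟩
  refine tendsto_of_hasDerivAt_eq_neg_mul_add hα ?_
    (tendsto_const_nhds.div hratio (div_pos hA (hx0 i)).ne')
  filter_upwards [eventually_ge_atTop 0] with t ht
  exact (hx i t ht).congr_deriv (by rw [Pi.div_apply, div_div_eq_mul_div]; ring)

end EigenAnt

theorem stmt13
    (n : ℕ) (hn : 0 < n) (α β : ℝ) (hα : 0 < α) (hβ : 0 < β)
    (d : Fin n → ℝ) (hd : ∀ i j : Fin n, i ≤ j → d j ≤ d i) (hdpos : ∀ i, 0 < d i)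
    (x : ℝ → Fin n → ℝ)
    (hS : ∀ t : ℝ, 0 ≤ t → (∑ j, x t j) ≠ 0)
    (hode : ∀ (i : Fin n) (t : ℝ), 0 ≤ t →
      HasDerivAt (fun s => x s i) ((-α + β * d i / (∑ j, x t j)) * x t i) t)
    (hx0 : ∀ i, 0 < x 0 i)
    (σ1 : ℝ)
    (hσ1 : σ1 = (1 / (β * d ⟨0, hn⟩)) * ∑ j ∈ Finset.univ.filter (fun j => d j = d ⟨0, hn⟩), x 0 j) :
    (∀ i : Fin n, d i = d ⟨0, hn⟩ →
      Tendsto (fun t => x t i) atTop (nhds (x 0 i / (α * σ1)))) ∧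
    (∀ i i' : Fin n, d i = d ⟨0, hn⟩ → d i' = d ⟨0, hn⟩ →
      ∃ Li Li' : ℝ, Tendsto (fun t => x t i) atTop (nhds Li) ∧
        Tendsto (fun t => x t i') atTop (nhds Li') ∧
        Li / Li' = x 0 i / x 0 i') := by
  have : Nonempty (Fin n) := ⟨⟨0, hn⟩⟩
  have hx : IsEigenAntSolution α β d x := hode
  have hdmax : ∀ j, d j ≤ d ⟨0, hn⟩ := fun j => hd _ j (Nat.zero_le j)
  have hinv : ContinuousOn (fun t => (∑ j, x t j)⁻¹) (Ici 0) :=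
    (continuousOn_finsetSum _ fun j _ t ht =>
      (hx j t ht).continuousAt.continuousWithinAt).inv₀ hS
  obtain ⟨φ, hφ⟩ := exists_hasDerivAt_eq_of_continuousOn_Ici hinv
  have hφtop := hx.tendsto_clock_atTop hφ hα hβ.le (fun j => (hdpos j).le) hdmax hx0
  have hlim : ∀ i, d i = d ⟨0, hn⟩ →
      Tendsto (fun t => x t i) atTop (𝓝 (x 0 i / (α * σ1))) := by
    intro i hi
    have := hx.tendsto_of_forall_le hφ hα hβ hφtop hx0 (hi ▸ hdmax)
    rw [hi] at this
    convert this using 2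
    have hd₀ := hdpos ⟨0, hn⟩
    rw [hσ1]
    field_simp
  have hσ1pos : 0 < σ1 := by
    have : 0 < ∑ j ∈ Finset.univ.filter (fun j => d j = d ⟨0, hn⟩), x 0 j :=
      Finset.sum_pos (fun j _ => hx0 j) ⟨⟨0, hn⟩, by simp⟩
    have hd₀ := hdpos ⟨0, hn⟩
    rw [hσ1]
    positivity
  refine ⟨hlim, fun i i' hi hi' => ⟨_, _, hlim i hi, hlim i' hi', ?_⟩⟩
  have hx0i' := (hx0 i').ne'
  field_simp
end

section
/- Let c_1, …, c_n > 0 and d_1 ≥ ⋯ ≥ d_n > 0 with at least one index i such that d_i < d_1, and β > 0. Define F(u) := Σ_{i=1}^n (c_i/(β d_i)) e^{β d_i u}, σ_1 := (1/(β d_1)) Σ_{j : d_j = d_1} c_j, d′_2 := max{ d_j : d_j < d_1 }, and σ_2 := (1/(β d′_2)) Σ_{j : d_j = d′_2} c_j. Then the second-order asymptotic expansion of the inverse F^{−1} holds: ( y − σ_1 e^{β d_1 F^{−1}(y)} ) / ( σ_2 (y/σ_1)^{d′_2/d_1} ) → 1 as y → +∞. In particular F^{−1}(y) − (1/(β d_1))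 log(y/σ_1) → 0 as y → +∞. -/
/-!
F is an exponential polynomial, so F u = σ₁ e^{β d₁ u} + σ₂ e^{β d₂' u} + o(e^{β d₂' u}) as
u → ∞. Since F is monotone, F⁻¹ y → ∞, and substituting u = F⁻¹ y gives
y / e^{β d₁ F⁻¹ y} → σ₁ and (y - σ₁ e^{β d₁ F⁻¹ y}) / e^{β d₂' F⁻¹ y} → σ₂. Raising the first
limit to the power d₂'/d₁ turns e^{β d₂' F⁻¹ y} into (y/σ₁)^{d₂'/d₁} up to a factor tending to 1,
and taking its logarithm gives the second claim.
-/

open Filter MeasureTheory Set Real Topology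

open Finset in
theorem tendsto_sum_mul_exp_div_exp {ι : Type*} (S : Finset ι) (w k : ι → ℝ) {a : ℝ}
    (hk : ∀ i ∈ S, k i ≤ a) :
    Tendsto (fun u => (∑ i ∈ S, w i * exp (k i * u)) / exp (a * u)) atTop
      (𝓝 (∑ i ∈ S with k i = a, w i)) := by
  have hshift : ∀ u, (∑ i ∈ S, w i * exp (k i * u)) / exp (a * u)
      = ∑ i ∈ S, w i * exp ((k i - a) * u) := fun u => by
    rw [sum_div]
    refine sum_congr rfl fun i _ => ?_
    rw [mul_div_assoc, ← exp_sub, sub_mul]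
  simp only [hshift, sum_filter]
  refine tendsto_finsetSum _ fun i hi => ?_
  by_cases hka : k i = a
  · simp [hka]
  · have hneg : k i - a < 0 := sub_neg.2 ((hk i hi).lt_of_ne hka)
    have hdecay : Tendsto (fun u => exp ((k i - a) * u)) atTop (𝓝 0) :=
      tendsto_exp_atBot.comp (tendsto_id.const_mul_atTop_of_neg hneg)
    simpa [hka] using hdecay.const_mul (w i)

open Finset in
theorem tendsto_sum_mul_exp_sub_leading_div_exp {ι : Type*} (S : Finset ι) (w k : ι → ℝ)
    {a b : ℝ} (hba : b < a) (hk : ∀ i ∈ S, k i ≤ a) (hgap : ∀ i ∈ S, k i < a → k i ≤ b) :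
    Tendsto (fun u => (∑ i ∈ S, w i * exp (k i * u)
        - (∑ i ∈ S with k i = a, w i) * exp (a * u)) / exp (b * u)) atTop
      (𝓝 (∑ i ∈ S with k i = b, w i)) := by
  have hrest : ∀ u, ∑ i ∈ S, w i * exp (k i * u) - (∑ i ∈ S with k i = a, w i) * exp (a * u)
      = ∑ i ∈ S with k i ≠ a, w i * exp (k i * u) := fun u => by
    rw [← sum_filter_add_sum_filter_not S (fun i => k i = a), sum_mul, add_sub_right_comm,
      ← sum_sub_distrib, sum_eq_zero fun i hi => by rw [(mem_filter.1 hi).2, sub_self], zero_add]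
  have hfilter : {i ∈ {i ∈ S | k i ≠ a} | k i = b} = {i ∈ S | k i = b} := by
    rw [filter_filter]
    exact filter_congr fun i _ => ⟨And.right, fun h => ⟨h ▸ hba.ne, h⟩⟩
  simp only [hrest]
  rw [← hfilter]
  refine tendsto_sum_mul_exp_div_exp _ w k fun i hi => ?_
  obtain ⟨hiS, hia⟩ := mem_filter.1 hi
  exact hgap i hiS ((hk i hiS).lt_of_ne hia)

theorem tendsto_div_const_div_exp {f : ℝ → ℝ} {a σ : ℝ} (hσ : σ ≠ 0)
    (hf : Tendsto (fun u => f u / exp (a * u)) atTop (𝓝 σ)) :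
    Tendsto (fun u => f u / σ / exp (a * u)) atTop (𝓝 1) := by
  rw [← div_self hσ]
  exact (hf.div_const σ).congr fun u => div_right_comm _ _ _

theorem tendsto_div_mul_div_rpow {f g : ℝ → ℝ} {a b σ τ : ℝ} (ha : a ≠ 0) (hσ : σ ≠ 0)
    (hτ : τ ≠ 0) (hf : Tendsto (fun u => f u / exp (a * u)) atTop (𝓝 σ))
    (hg : Tendsto (fun u => g u / exp (b * u)) atTop (𝓝 τ)) :
    Tendsto (fun u => g u / (τ * (f u / σ) ^ (b / a))) atTop (𝓝 1) := by
  have hratio := tendsto_div_const_div_exp hσ hf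
  have hpow : Tendsto (fun u => (f u / σ / exp (a * u)) ^ (b / a)) atTop (𝓝 1) := by
    simpa using hratio.rpow_const (Or.inl one_ne_zero)
  have hlim := hg.div (hpow.const_mul τ) (by simpa using hτ)
  rw [mul_one, div_self hτ] at hlim
  refine hlim.congr' ?_
  filter_upwards [hratio.eventually (eventually_gt_nhds one_pos)] with u hu
  have hexp : exp (a * u) ^ (b / a) = exp (b * u) := by
    rw [← exp_mul]
    field_simp
  have hsplit : (f u / σ) ^ (b / a) = (f u / σ / exp (a * u)) ^ (b / a) * exp (b * u) := by
    rw [← hexp, ← mul_rpow hu.le (exp_pos _).le, div_mul_cancel₀ _ (exp_pos _).ne']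
  simp only [Pi.div_apply, hsplit]
  field_simp

theorem tendsto_sub_log_div {f : ℝ → ℝ} {a σ : ℝ} (ha : a ≠ 0) (hσ : σ ≠ 0)
    (hf : Tendsto (fun u => f u / exp (a * u)) atTop (𝓝 σ)) :
    Tendsto (fun u => u - 1 / a * log (f u / σ)) atTop (𝓝 0) := by
  have hratio := tendsto_div_const_div_exp hσ hf
  have hlog : Tendsto (fun u => -(1 / a) * log (f u / σ / exp (a * u))) atTop (𝓝 0) := by
    simpa using ((continuousAt_log one_ne_zero).tendsto.comp hratio).const_mul (-(1 / a))
  refine hlog.congr' ?_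
  filter_upwards [hratio.eventually (eventually_gt_nhds one_pos)] with u hu
  rw [log_div (div_ne_zero_iff.1 hu.ne').1 (exp_pos _).ne', log_exp]
  field_simp
  ring

theorem monotone_sum_mul_exp {ι : Type*} (S : Finset ι) {w k : ι → ℝ} (hw : ∀ i, 0 ≤ w i)
    (hk : ∀ i, 0 ≤ k i) : Monotone fun u => ∑ i ∈ S, w i * exp (k i * u) := fun u v huv => by
  dsimp only
  gcongr with i
  exacts [hw i, hk i]

theorem tendsto_atTop_of_monotone_of_eventually_apply_eq {α β : Type*} [LinearOrder α]
    [Preorder β] [NoMaxOrder β] {F : α → β} {g : β → α} (hF : Monotone F)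
    (hg : ∀ᶠ y in atTop, F (g y) = y) : Tendsto g atTop atTop := by
  refine tendsto_atTop.2 fun M => ?_
  filter_upwards [hg, eventually_gt_atTop (F M)] with y hy hMy
  by_contra! hlt
  exact (hy ▸ hF hlt.le).not_gt hMy

open Finset in
theorem one_div_mul_sum_filter_eq_sum_filter_div {ι : Type*} [Fintype ι] (c d : ι → ℝ)
    {β a : ℝ} (hβ : β ≠ 0) :
    1 / (β * a) * ∑ j with d j = a, c j = ∑ j with β * d j = β * a, c j / (β * d j) := by
  rw [mul_sum]
  refine sum_congr (filter_congr fun j _ => (mul_right_inj' hβ).symm) fun j hj => ?_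
  rw [(mem_filter.1 hj).2, one_div_mul_eq_div]

open Finset in
theorem one_div_mul_sum_filter_pos {ι : Type*} [Fintype ι] {c d : ι → ℝ} {β a : ℝ}
    (hc : ∀ i, 0 < c i) (hβ : 0 < β) (ha : 0 < a) (hmem : ∃ j, d j = a) :
    0 < 1 / (β * a) * ∑ j with d j = a, c j := by
  obtain ⟨j, hj⟩ := hmem
  exact mul_pos (by positivity) (sum_pos (fun i _ => hc i) ⟨j, mem_filter.2 ⟨mem_univ j, hj⟩⟩)

theorem stmt14_general
    (n : ℕ) (hn : 0 < n) (β : ℝ) (hβ : 0 < β)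
    (c d : Fin n → ℝ) (hc : ∀ i, 0 < c i)
    (hd : ∀ i j : Fin n, i ≤ j → d j ≤ d i) (hdpos : ∀ i, 0 < d i)
    (F : ℝ → ℝ)
    (hF : ∀ u, F u = ∑ i, c i / (β * d i) * Real.exp (β * d i * u))
    (σ1 σ2 d2 : ℝ)
    (hσ1 : σ1 = (1 / (β * d ⟨0, hn⟩)) * ∑ j ∈ Finset.univ.filter (fun j => d j = d ⟨0, hn⟩), c j)
    (hd2mem : ∃ j, d j = d2) (hd2lt : d2 < d ⟨0, hn⟩)
    (hd2max : ∀ j, d j < d ⟨0, hn⟩ → d j ≤ d2)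
    (hσ2 : σ2 = (1 / (β * d2)) * ∑ j ∈ Finset.univ.filter (fun j => d j = d2), c j)
    (Finv : ℝ → ℝ)
    (hFinv : ∀ y : ℝ, F 0 ≤ y → 0 ≤ Finv y ∧ F (Finv y) = y) :
    Tendsto (fun y => (y - σ1 * Real.exp (β * d ⟨0, hn⟩ * Finv y)) /
        (σ2 * (y / σ1) ^ (d2 / d ⟨0, hn⟩))) atTop (nhds 1) ∧
    Tendsto (fun y => Finv y - (1 / (β * d ⟨0, hn⟩)) * Real.log (y / σ1)) atTop (nhds 0) := by
  set d1 := d ⟨0, hn⟩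
  have hd2pos : 0 < d2 := hd2mem.elim fun j hj => hj ▸ hdpos j
  have hσ1pos : 0 < σ1 := hσ1 ▸ one_div_mul_sum_filter_pos hc hβ (hdpos _) ⟨_, rfl⟩
  have hσ2pos : 0 < σ2 := hσ2 ▸ one_div_mul_sum_filter_pos hc hβ hd2pos hd2mem
  rw [one_div_mul_sum_filter_eq_sum_filter_div c d hβ.ne'] at hσ1 hσ2
  have hd1_max : ∀ i, β * d i ≤ β * d1 := fun i =>
    mul_le_mul_of_nonneg_left (hd _ i (Fin.mk_le_of_le_val (Nat.zero_le _))) hβ.le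
  have hleading : Tendsto (fun u => F u / exp (β * d1 * u)) atTop (nhds σ1) := by
    simpa only [hF, hσ1] using
      tendsto_sum_mul_exp_div_exp Finset.univ (fun i => c i / (β * d i)) (fun i => β * d i)
        fun i _ => hd1_max i
  have hsecond : Tendsto (fun u => (F u - σ1 * exp (β * d1 * u)) / exp (β * d2 * u)) atTop
      (nhds σ2) := by
    simpa only [hF, hσ1, hσ2] using
      tendsto_sum_mul_exp_sub_leading_div_exp Finset.univ (fun i => c i / (β * d i))
        (fun i => β * d i) (mul_lt_mul_of_pos_left hd2lt hβ) (fun i _ => hd1_max i)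
        fun i _ hi => mul_le_mul_of_nonneg_left (hd2max i (lt_of_mul_lt_mul_left hi hβ.le)) hβ.le
  have hFmono : Monotone F := by
    simpa only [← hF] using monotone_sum_mul_exp Finset.univ
      (fun i => (div_pos (hc i) (mul_pos hβ (hdpos i))).le) fun i => (mul_pos hβ (hdpos i)).le
  have hFFinv : ∀ᶠ y in atTop, F (Finv y) = y :=
    (eventually_ge_atTop (F 0)).mono fun y hy => (hFinv y hy).2
  have hFinv_top := tendsto_atTop_of_monotone_of_eventually_apply_eq hFmono hFFinv
  have hβd1 : β * d1 ≠ 0 := (mul_pos hβ (hdpos _)).ne'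
  constructor
  · refine ((tendsto_div_mul_div_rpow hβd1 hσ1pos.ne' hσ2pos.ne' hleading hsecond).comp
      hFinv_top).congr' ?_
    filter_upwards [hFFinv] with y hy
    simp only [Function.comp, hy, mul_div_mul_left _ _ hβ.ne']
  · refine ((tendsto_sub_log_div hβd1 hσ1pos.ne' hleading).comp hFinv_top).congr' ?_
    filter_upwards [hFFinv] with y hy
    simp only [Function.comp, hy]

theorem stmt14
    (n : ℕ) (hn : 0 < n) (β : ℝ) (hβ : 0 < β)
    (c d : Fin n → ℝ) (hc : ∀ i, 0 < c i)
    (hd : ∀ i j : Fin n, i ≤ j → d j ≤ d i) (hdpos : ∀ i, 0 < d i)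
    (hsub : ∃ i, d i < d ⟨0, hn⟩)
    (F : ℝ → ℝ)
    (hF : ∀ u, F u = ∑ i, c i / (β * d i) * Real.exp (β * d i * u))
    (σ1 σ2 d2 : ℝ)
    (hσ1 : σ1 = (1 / (β * d ⟨0, hn⟩)) * ∑ j ∈ Finset.univ.filter (fun j => d j = d ⟨0, hn⟩), c j)
    (hd2mem : ∃ j, d j = d2) (hd2lt : d2 < d ⟨0, hn⟩)
    (hd2max : ∀ j, d j < d ⟨0, hn⟩ → d j ≤ d2)
    (hσ2 : σ2 = (1 / (β * d2)) * ∑ j ∈ Finset.univ.filter (fun j => d j = d2), c j)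
    (Finv : ℝ → ℝ)
    (hFinv : ∀ y : ℝ, F 0 ≤ y → 0 ≤ Finv y ∧ F (Finv y) = y) :
    Tendsto (fun y => (y - σ1 * Real.exp (β * d ⟨0, hn⟩ * Finv y)) /
        (σ2 * (y / σ1) ^ (d2 / d ⟨0, hn⟩))) atTop (nhds 1) ∧
    Tendsto (fun y => Finv y - (1 / (β * d ⟨0, hn⟩)) * Real.log (y / σ1)) atTop (nhds 0) :=
  stmt14_general n hn β hβ c d hc hd hdpos F hF σ1 σ2 d2 hσ1 hd2mem hd2lt hd2max hσ2 Finv hFinv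
end
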